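/- arXiv:2603.16465 — 3 statements merged into one kernel-verified Lean document; each statement's English description precedes it below -/
import Mathlib

section
/- Let a, c, p ∈ ℂ with −c ∉ ℕ ∪ {0}, and let i denote the imaginary unit. Define sequences (u_n) and (v_n) by u_0 = 1, u_1 = a/c + i p, v_0 = 1, v_1 = a/c − i p, and for n ≥ 1: u_{n+1} = ((a + i p(c + 2n) + n)/((n+1)(c+n))) u_n − ((i p − p²)/((n+1)(c+n))) u_{n−1}, and v_{n+1} = ((a − i p(c + 2n) + n)/((n+1)(c+n))) v_n + ((i p + p²)/((n+1)(c+n))) v_{n−1}. Then sin(pz) M(a,c;z) = ∑_{n=0}^∞ ((u_n − v_n)/(2i)) z^n for all z ∈ ℂ. -/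
open Complex Finset Polynomial

noncomputable def M (a c z : ℂ) : ℂ :=
  ∑' n : ℕ, (ascPochhammer ℂ n).eval a / ((ascPochhammer ℂ n).eval c * (Nat.factorial n : ℂ)) * z ^ n

noncomputable def alC (a c : ℂ) (k : ℕ) : ℂ :=
  (ascPochhammer ℂ k).eval a / ((ascPochhammer ℂ k).eval c * (Nat.factorial k : ℂ))

noncomputable def beC (q : ℂ) (m : ℕ) : ℂ := q ^ m / (Nat.factorial m : ℂ)

noncomputable def wC (a c q : ℂ) (n : ℕ) : ℂ :=
  ∑ k ∈ Finset.range (n + 1), beC q (n - k) * alC a c k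

noncomputable def TsC (a c q : ℂ) (n : ℕ) : ℂ :=
  ∑ k ∈ Finset.range (n + 1), (k : ℂ) * beC q (n - k) * alC a c k

lemma cadd_ne (c : ℂ) (hc : ∀ n : ℕ, -c ≠ (n : ℂ)) (k : ℕ) : c + (k : ℂ) ≠ 0 := by
  intro h
  exact hc k (by linear_combination -h)

lemma pochC_ne (c : ℂ) (hc : ∀ n : ℕ, -c ≠ (n : ℂ)) (k : ℕ) :
    (ascPochhammer ℂ k).eval c ≠ 0 := by
  induction k with
  | zero => simp
  | succ k ih =>
    rw [ascPochhammer_succ_eval]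
    exact mul_ne_zero ih (cadd_ne c hc k)

lemma alC_rec (a c : ℂ) (hc : ∀ n : ℕ, -c ≠ (n : ℂ)) (k : ℕ) :
    ((k : ℂ) + 1) * (c + (k : ℂ)) * alC a c (k + 1) = (a + (k : ℂ)) * alC a c k := by
  have h1 : (ascPochhammer ℂ k).eval c ≠ 0 := pochC_ne c hc k
  have h2 : c + (k : ℂ) ≠ 0 := cadd_ne c hc k
  have h3 : ((Nat.factorial k : ℕ) : ℂ) ≠ 0 := Nat.cast_ne_zero.2 (Nat.factorial_ne_zero k)
  have h4 : ((k : ℂ) + 1) ≠ 0 := by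
    have := Nat.cast_ne_zero (R := ℂ).2 (Nat.succ_ne_zero k)
    push_cast at this; exact this
  simp only [alC, ascPochhammer_succ_eval, Nat.factorial_succ]
  push_cast
  field_simp

lemma beC_shift (q : ℂ) (m : ℕ) : ((m : ℂ) + 1) * beC q (m + 1) = q * beC q m := by
  have h3 : ((Nat.factorial m : ℕ) : ℂ) ≠ 0 := Nat.cast_ne_zero.2 (Nat.factorial_ne_zero m)
  have h4 : ((m : ℂ) + 1) ≠ 0 := by
    have := Nat.cast_ne_zero (R := ℂ).2 (Nat.succ_ne_zero m)
    push_cast at this; exact this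
  simp only [beC, Nat.factorial_succ, pow_succ]
  push_cast
  field_simp

lemma beC_shift' (q : ℂ) {k n : ℕ} (hk : k ≤ n) :
    ((n : ℂ) + 1 - (k : ℂ)) * beC q (n + 1 - k) = q * beC q (n - k) := by
  have h1 : n + 1 - k = (n - k) + 1 := by omega
  have h2 : (n : ℂ) + 1 - (k : ℂ) = ((n - k : ℕ) : ℂ) + 1 := by
    push_cast [Nat.cast_sub hk]; ring
  rw [h1, h2, beC_shift]

lemma L2 (a c q : ℂ) (n : ℕ) :
    TsC a c q (n + 1) = ((n : ℂ) + 1) * wC a c q (n + 1) - q * wC a c q n := by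
  have key : ((n : ℂ) + 1) * wC a c q (n + 1) - TsC a c q (n + 1)
      = q * wC a c q n := by
    rw [wC, TsC, Finset.mul_sum, ← Finset.sum_sub_distrib]
    rw [Finset.sum_range_succ]
    have hlast : ((n : ℂ) + 1) * (beC q (n + 1 - (n + 1)) * alC a c (n + 1)) -
        ((n + 1 : ℕ) : ℂ) * beC q (n + 1 - (n + 1)) * alC a c (n + 1) = 0 := by
      push_cast; ring
    rw [hlast, add_zero, wC, Finset.mul_sum]
    apply Finset.sum_congr rfl
    intro k hk
    have hk' : k ≤ n := by simpa using Nat.lt_succ_iff.mp (Finset.mem_range.mp hk)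
    have := beC_shift' q (n := n) (k := k) hk'
    calc ((n : ℂ) + 1) * (beC q (n + 1 - k) * alC a c k) -
          (k : ℂ) * beC q (n + 1 - k) * alC a c k
        = (((n : ℂ) + 1 - (k : ℂ)) * beC q (n + 1 - k)) * alC a c k := by ring
      _ = (q * beC q (n - k)) * alC a c k := by rw [this]
      _ = q * (beC q (n - k) * alC a c k) := by ring
  linear_combination -key

lemma L1 (a c q : ℂ) (hc : ∀ n : ℕ, -c ≠ (n : ℂ)) (n : ℕ) :
    ((n : ℂ) + 1) * ((n : ℂ) + c) * wC a c q (n + 1)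
      = (q * ((n : ℂ) + c) + a) * wC a c q n + (1 + q) * TsC a c q n := by
  have hA : ∑ k ∈ Finset.range (n + 2),
      (((n : ℂ) + 1 - (k : ℂ)) * ((n : ℂ) + c)) * (beC q (n + 1 - k) * alC a c k)
      = q * ((n : ℂ) + c) * wC a c q n := by
    rw [Finset.sum_range_succ]
    have h0 : ((n : ℂ) + 1 - ((n + 1 : ℕ) : ℂ)) = 0 := by push_cast; ring
    rw [h0, zero_mul, zero_mul, add_zero, wC, Finset.mul_sum]
    apply Finset.sum_congr rfl
    intro k hk
    have hk' : k ≤ n := Nat.lt_succ_iff.mp (Finset.mem_range.mp hk)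
    calc (((n : ℂ) + 1 - (k : ℂ)) * ((n : ℂ) + c)) * (beC q (n + 1 - k) * alC a c k)
        = ((n : ℂ) + c) * ((((n : ℂ) + 1 - (k : ℂ)) * beC q (n + 1 - k)) * alC a c k) := by
          ring
      _ = q * ((n : ℂ) + c) * (beC q (n - k) * alC a c k) := by rw [beC_shift' q hk']; ring
  have hC : ∑ k ∈ Finset.range (n + 2),
      ((k : ℂ) * ((n : ℂ) + 1 - (k : ℂ))) * (beC q (n + 1 - k) * alC a c k)
      = q * TsC a c q n := by
    rw [Finset.sum_range_succ]
    have h0 : ((n : ℂ) + 1 - ((n + 1 : ℕ) : ℂ)) = 0 := by push_cast; ring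
    rw [h0, mul_zero, zero_mul, add_zero, TsC, Finset.mul_sum]
    apply Finset.sum_congr rfl
    intro k hk
    have hk' : k ≤ n := Nat.lt_succ_iff.mp (Finset.mem_range.mp hk)
    calc ((k : ℂ) * ((n : ℂ) + 1 - (k : ℂ))) * (beC q (n + 1 - k) * alC a c k)
        = (k : ℂ) * ((((n : ℂ) + 1 - (k : ℂ)) * beC q (n + 1 - k)) * alC a c k) := by ring
      _ = q * ((k : ℂ) * beC q (n - k) * alC a c k) := by rw [beC_shift' q hk']; ring
  have hB : ∑ k ∈ Finset.range (n + 2),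
      ((k : ℂ) * (c + (k : ℂ) - 1)) * (beC q (n + 1 - k) * alC a c k)
      = a * wC a c q n + TsC a c q n := by
    rw [Finset.sum_range_succ']
    simp only [Nat.cast_zero, zero_mul, mul_zero, add_zero, zero_mul]
    have : ∀ i ∈ Finset.range (n + 1),
        (((i + 1 : ℕ) : ℂ) * (c + ((i + 1 : ℕ) : ℂ) - 1)) * (beC q (n + 1 - (i + 1)) * alC a c (i + 1))
        = (a + (i : ℂ)) * beC q (n - i) * alC a c i := by
      intro i _
      have h1 : n + 1 - (i + 1) = n - i := by omega
      have h2 : (((i + 1 : ℕ) : ℂ) * (c + ((i + 1 : ℕ) : ℂ) - 1)) = ((i : ℂ) + 1) * (c + (i : ℂ)) := by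
        push_cast; ring
      rw [h1, h2]
      calc ((i : ℂ) + 1) * (c + (i : ℂ)) * (beC q (n - i) * alC a c (i + 1))
          = (((i : ℂ) + 1) * (c + (i : ℂ)) * alC a c (i + 1)) * beC q (n - i) := by ring
        _ = ((a + (i : ℂ)) * alC a c i) * beC q (n - i) := by rw [alC_rec a c hc i]
        _ = (a + (i : ℂ)) * beC q (n - i) * alC a c i := by ring
    rw [Finset.sum_congr rfl this, wC, TsC, Finset.mul_sum, ← Finset.sum_add_distrib]
    apply Finset.sum_congr rfl
    intro k _
    ring
  have hsplit : ((n : ℂ) + 1) * ((n : ℂ) + c) * wC a c q (n + 1)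
      = (∑ k ∈ Finset.range (n + 2),
          (((n : ℂ) + 1 - (k : ℂ)) * ((n : ℂ) + c)) * (beC q (n + 1 - k) * alC a c k))
      + (∑ k ∈ Finset.range (n + 2),
          ((k : ℂ) * (c + (k : ℂ) - 1)) * (beC q (n + 1 - k) * alC a c k))
      + (∑ k ∈ Finset.range (n + 2),
          ((k : ℂ) * ((n : ℂ) + 1 - (k : ℂ))) * (beC q (n + 1 - k) * alC a c k)) := by
    rw [wC, Finset.mul_sum, ← Finset.sum_add_distrib, ← Finset.sum_add_distrib]
    apply Finset.sum_congr rfl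
    intro k _
    ring
  rw [hsplit, hA, hB, hC]
  ring

lemma wrec (a c q : ℂ) (hc : ∀ n : ℕ, -c ≠ (n : ℂ)) (n : ℕ) (hn : 1 ≤ n) :
    ((n : ℂ) + 1) * (c + (n : ℂ)) * wC a c q (n + 1)
      = (a + q * (c + 2 * (n : ℂ)) + (n : ℂ)) * wC a c q n
        - (q + q ^ 2) * wC a c q (n - 1) := by
  obtain ⟨m, rfl⟩ : ∃ m, n = m + 1 := ⟨n - 1, by omega⟩
  have h1 := L1 a c q hc (m + 1)
  have h2 := L2 a c q m
  have hsub : (m + 1) - 1 = m := by omega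
  rw [hsub]
  rw [h2] at h1
  push_cast at h1 ⊢
  linear_combination h1

lemma wC_zero (a c q : ℂ) : wC a c q 0 = 1 := by
  simp [wC, beC, alC]

lemma wC_one (a c q : ℂ) : wC a c q 1 = a / c + q := by
  simp [wC, beC, alC, Finset.sum_range_succ, ascPochhammer_one]
  ring

lemma u_eq_w (a c q : ℂ) (hc : ∀ n : ℕ, -c ≠ (n : ℂ)) (u : ℕ → ℂ)
    (hu0 : u 0 = 1) (hu1 : u 1 = a / c + q)
    (hrec : ∀ n : ℕ, 1 ≤ n →
      u (n + 1) = (a + q * (c + 2 * (n : ℂ)) + (n : ℂ)) / (((n : ℂ) + 1) * (c + (n : ℂ))) * u n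
        - (q + q ^ 2) / (((n : ℂ) + 1) * (c + (n : ℂ))) * u (n - 1)) :
    ∀ n, u n = wC a c q n := by
  have key : ∀ n, u n = wC a c q n ∧ u (n + 1) = wC a c q (n + 1) := by
    intro n
    induction n with
    | zero => exact ⟨by rw [hu0, wC_zero], by rw [hu1, wC_one]⟩
    | succ m ih =>
      refine ⟨ih.2, ?_⟩
      have h1 : (1 : ℕ) ≤ m + 1 := by omega
      have hr := hrec (m + 1) h1
      have hw := wrec a c q hc (m + 1) h1
      have hsub : m + 1 - 1 = m := by omega
      rw [hsub] at hr hw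
      push_cast at hr hw
      rw [hr, ih.1, ih.2]
      have hD1 : ((m : ℂ) + 1 + 1) ≠ 0 := by
        have := Nat.cast_ne_zero (R := ℂ).2 (Nat.succ_ne_zero (m + 1))
        push_cast at this; exact this
      have hD2 : c + ((m : ℂ) + 1) ≠ 0 := by
        have := cadd_ne c hc (m + 1); push_cast at this; exact this
      field_simp
      linear_combination -hw
  exact fun n => (key n).1

lemma summable_al (a c : ℂ) (hc : ∀ n : ℕ, -c ≠ (n : ℂ)) (z : ℂ) :
    Summable fun k : ℕ => ‖alC a c k * z ^ k‖ := by
  apply summable_of_ratio_norm_eventually_le (r := 1 / 2) (by norm_num)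
  rw [Filter.eventually_atTop]
  refine ⟨⌈‖a‖⌉₊ + 2 * ⌈‖c‖⌉₊ + ⌈8 * ‖z‖⌉₊ + 1, fun k hk => ?_⟩
  have c1 : ⌈‖a‖⌉₊ ≤ k := by omega
  have c2 : 2 * ⌈‖c‖⌉₊ ≤ k := by omega
  have c3 : ⌈8 * ‖z‖⌉₊ ≤ k := by omega
  have hka : ‖a‖ ≤ (k : ℝ) :=
    le_trans (Nat.le_ceil _) (by exact_mod_cast c1)
  have hkc : 2 * ‖c‖ ≤ (k : ℝ) := by
    have : (2 * ⌈‖c‖⌉₊ : ℝ) ≤ (k : ℝ) := by exact_mod_cast c2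
    nlinarith [Nat.le_ceil ‖c‖]
  have hk8 : 8 * ‖z‖ ≤ (k : ℝ) :=
    le_trans (Nat.le_ceil _) (by exact_mod_cast c3)
  have hk1 : (1 : ℝ) ≤ (k : ℝ) := by exact_mod_cast Nat.one_le_cast.2 (by omega)
  have hD2 : c + (k : ℂ) ≠ 0 := cadd_ne c hc k
  have hD1 : ((k : ℂ) + 1) ≠ 0 := by
    have := Nat.cast_ne_zero (R := ℂ).2 (Nat.succ_ne_zero k)
    push_cast at this; exact this
  have key : alC a c (k + 1) * z ^ (k + 1)
      = ((a + (k : ℂ)) * z / (((k : ℂ) + 1) * (c + (k : ℂ)))) * (alC a c k * z ^ k) := by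
    have h := alC_rec a c hc k
    field_simp
    linear_combination (z ^ k * z) * h
  rw [key]
  rw [norm_norm, norm_norm, norm_mul]
  have hzn : (0 : ℝ) ≤ ‖alC a c k * z ^ k‖ := norm_nonneg _
  have hratio : ‖(a + (k : ℂ)) * z / (((k : ℂ) + 1) * (c + (k : ℂ)))‖ ≤ 1 / 2 := by
    rw [norm_div]
    have hnum : ‖(a + (k : ℂ)) * z‖ ≤ 2 * k * ‖z‖ := by
      rw [norm_mul]
      have : ‖a + (k : ℂ)‖ ≤ ‖a‖ + (k : ℝ) := by
        calc ‖a + (k : ℂ)‖ ≤ ‖a‖ + ‖((k : ℕ) : ℂ)‖ := norm_add_le _ _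
        _ = ‖a‖ + (k : ℝ) := by rw [Complex.norm_natCast]
      nlinarith [norm_nonneg z, norm_nonneg a]
    have hck : (k : ℝ) - ‖c‖ ≤ ‖c + (k : ℂ)‖ := by
      have := norm_sub_norm_le ((k : ℕ) : ℂ) (-c)
      simp only [Complex.norm_natCast, norm_neg, sub_neg_eq_add] at this
      calc (k : ℝ) - ‖c‖ ≤ ‖((k : ℕ) : ℂ) + c‖ := this
      _ = ‖c + (k : ℂ)‖ := by rw [add_comm]
    have hden : (k : ℝ) * (k : ℝ) / 2 ≤ ‖((k : ℂ) + 1) * (c + (k : ℂ))‖ := by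
      rw [norm_mul]
      have h1 : (k : ℝ) ≤ ‖((k : ℂ) + 1)‖ := by
        have : ((k : ℂ) + 1) = ((k + 1 : ℕ) : ℂ) := by push_cast; ring
        rw [this, Complex.norm_natCast]
        exact_mod_cast Nat.le_succ k
      have h2 : (k : ℝ) / 2 ≤ ‖c + (k : ℂ)‖ := by nlinarith
      nlinarith [norm_nonneg (c + (k : ℂ)), norm_nonneg ((k : ℂ) + 1)]
    have hdenpos : (0 : ℝ) < ‖((k : ℂ) + 1) * (c + (k : ℂ))‖ := by nlinarith
    rw [div_le_iff₀ hdenpos]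
    nlinarith [norm_nonneg z]
  nlinarith

lemma summable_be (q z : ℂ) : Summable fun n : ℕ => ‖beC q n * z ^ n‖ := by
  have : (fun n : ℕ => ‖beC q n * z ^ n‖) = fun n : ℕ => ‖q * z‖ ^ n / (n.factorial : ℝ) := by
    funext n
    simp [beC, norm_div, norm_pow, norm_mul, div_mul_eq_mul_div, mul_pow]
  rw [this]
  exact Real.summable_pow_div_factorial _

lemma cauchy_term (a c q z : ℂ) (n : ℕ) :
    ∑ k ∈ Finset.range (n + 1), (beC q k * z ^ k) * (alC a c (n - k) * z ^ (n - k))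
      = wC a c q n * z ^ n := by
  have step1 : ∀ k ∈ Finset.range (n + 1),
      (beC q k * z ^ k) * (alC a c (n - k) * z ^ (n - k))
        = beC q k * alC a c (n - k) * z ^ n := by
    intro k hk
    have hk' : k ≤ n := Nat.lt_succ_iff.mp (Finset.mem_range.mp hk)
    have : z ^ k * z ^ (n - k) = z ^ n := by
      rw [← pow_add]; congr 1; omega
    calc (beC q k * z ^ k) * (alC a c (n - k) * z ^ (n - k))
        = beC q k * alC a c (n - k) * (z ^ k * z ^ (n - k)) := by ring
      _ = beC q k * alC a c (n - k) * z ^ n := by rw [this]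
  rw [Finset.sum_congr rfl step1]
  rw [← Finset.sum_range_reflect]
  rw [wC, Finset.sum_mul]
  apply Finset.sum_congr rfl
  intro j hj
  have hj' : j ≤ n := Nat.lt_succ_iff.mp (Finset.mem_range.mp hj)
  have h1 : n + 1 - 1 - j = n - j := by omega
  have h2 : n - (n - j) = j := by omega
  rw [h1, h2]

lemma exp_mul_M (a c : ℂ) (hc : ∀ n : ℕ, -c ≠ (n : ℂ)) (q z : ℂ) :
    Complex.exp (q * z) * M a c z = ∑' n : ℕ, wC a c q n * z ^ n := by
  have hM : M a c z = ∑' k : ℕ, alC a c k * z ^ k := by rw [M]; rfl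
  have hexp : Complex.exp (q * z) = ∑' n : ℕ, beC q n * z ^ n := by
    rw [Complex.exp_eq_exp_ℂ, NormedSpace.exp_eq_tsum_div]
    apply tsum_congr
    intro n
    rw [beC]
    rw [mul_pow]
    ring
  rw [hM, hexp, tsum_mul_tsum_eq_tsum_sum_range_of_summable_norm (summable_be q z)
    (summable_al a c hc z)]
  exact tsum_congr (cauchy_term a c q z)

lemma summable_w (a c : ℂ) (hc : ∀ n : ℕ, -c ≠ (n : ℂ)) (q z : ℂ) :
    Summable fun n : ℕ => wC a c q n * z ^ n := by
  have h := (summable_norm_sum_mul_range_of_summable_norm (summable_be q z)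
    (summable_al a c hc z)).of_norm
  exact h.congr (cauchy_term a c q z)

theorem stmt3 (a c p : ℂ) (hc : ∀ n : ℕ, -c ≠ (n : ℂ))
    (u v : ℕ → ℂ)
    (hu0 : u 0 = 1) (hu1 : u 1 = a / c + Complex.I * p)
    (hv0 : v 0 = 1) (hv1 : v 1 = a / c - Complex.I * p)
    (hrecu : ∀ n : ℕ, 1 ≤ n →
      u (n + 1) = (a + Complex.I * p * (c + 2 * (n : ℂ)) + (n : ℂ)) / (((n : ℂ) + 1) * (c + (n : ℂ))) * u n
        - (Complex.I * p - p ^ 2) / (((n : ℂ) + 1) * (c + (n : ℂ))) * u (n - 1))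
    (hrecv : ∀ n : ℕ, 1 ≤ n →
      v (n + 1) = (a - Complex.I * p * (c + 2 * (n : ℂ)) + (n : ℂ)) / (((n : ℂ) + 1) * (c + (n : ℂ))) * v n
        + (Complex.I * p + p ^ 2) / (((n : ℂ) + 1) * (c + (n : ℂ))) * v (n - 1)) :
    ∀ z : ℂ, Complex.sin (p * z) * M a c z = ∑' n : ℕ, (u n - v n) / (2 * Complex.I) * z ^ n := by
  intro z
  have hu : ∀ n, u n = wC a c (Complex.I * p) n := by
    refine u_eq_w a c (Complex.I * p) hc u hu0 hu1 ?_
    intro n hn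
    rw [hrecu n hn]
    linear_combination (p ^ 2 * u (n - 1) / (((n : ℂ) + 1) * (c + (n : ℂ)))) * Complex.I_sq
  have hv : ∀ n, v n = wC a c (-(Complex.I * p)) n := by
    refine u_eq_w a c (-(Complex.I * p)) hc v hv0 (by rw [hv1]; ring) ?_
    intro n hn
    rw [hrecv n hn]
    linear_combination (p ^ 2 * v (n - 1) / (((n : ℂ) + 1) * (c + (n : ℂ)))) * Complex.I_sq
  have s1 : Summable fun n : ℕ => wC a c (Complex.I * p) n * z ^ n := summable_w a c hc _ z
  have s2 : Summable fun n : ℕ => wC a c (-(Complex.I * p)) n * z ^ n := summable_w a c hc _ z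
  have h1 := exp_mul_M a c hc (Complex.I * p) z
  have h2 := exp_mul_M a c hc (-(Complex.I * p)) z
  have hRHS : ∑' n : ℕ, (u n - v n) / (2 * Complex.I) * z ^ n
      = (1 / (2 * Complex.I)) * (∑' n : ℕ, wC a c (Complex.I * p) n * z ^ n)
        - (1 / (2 * Complex.I)) * (∑' n : ℕ, wC a c (-(Complex.I * p)) n * z ^ n) := by
    rw [← tsum_mul_left, ← tsum_mul_left, ← Summable.tsum_sub (s1.mul_left _) (s2.mul_left _)]
    apply tsum_congr
    intro n
    rw [hu n, hv n]
    ring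
  rw [hRHS, ← h1, ← h2]
  have e1 : Complex.exp (Complex.I * p * z) = Complex.exp (p * z * Complex.I) := by
    congr 1; ring
  have e2 : Complex.exp (-(Complex.I * p) * z) = Complex.exp (-(p * z) * Complex.I) := by
    congr 1; ring
  rw [e1, e2, Complex.sin]
  have hinv : (1 : ℂ) / (2 * Complex.I) = -Complex.I / 2 := by
    rw [div_eq_iff (by simp [Complex.I_ne_zero] : (2 : ℂ) * Complex.I ≠ 0)]
    linear_combination Complex.I_sq
  rw [hinv]
  ring
end

section
/- Let a, b, c, p ∈ ℂ with −c ∉ ℕ ∪ {0}. Define sequences (u_n) and (v_n) by u_0 = 1, u_1 = ab/c + p, u_2 = a(1+a)b(1+b)/(2c(1+c)) + abp/c + p²/2, v_0 = 1, v_1 = ab/c − p, v_2 = a(1+a)b(1+b)/(2c(1+c)) − abp/c + p²/2, and for n ≥ 2: u_{n+1} = (((a+n)(b+n) + p(c+2n))/((n+1)(c+n))) u_n − (p(a+b+2n+p−1)/((n+1)(c+n))) u_{n−1} + (p²/((n+1)(c+n))) u_{n−2}, and v_{n+1} = (((a+n)(b+n) − p(c+2n))/((n+1)(c+n))) v_n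 + (p(a+b+2n−p−1)/((n+1)(c+n))) v_{n−1} + (p²/((n+1)(c+n))) v_{n−2}. Then sinh(pz) F(a,b;c;z) = ∑_{n=0}^∞ ((u_n − v_n)/2) z^n for |z| < 1. -/
open Complex Finset Polynomial

open Filter


noncomputable def F (a b c z : ℂ) : ℂ :=
  ∑' n : ℕ, (ascPochhammer ℂ n).eval a * (ascPochhammer ℂ n).eval b /
    ((ascPochhammer ℂ n).eval c * (Nat.factorial n : ℂ)) * z ^ n

noncomputable def fc (a b c : ℂ) (n : ℕ) : ℂ :=
  (ascPochhammer ℂ n).eval a * (ascPochhammer ℂ n).eval b /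
    ((ascPochhammer ℂ n).eval c * (Nat.factorial n : ℂ))

noncomputable def gc (a b c p : ℂ) (n : ℕ) : ℂ :=
  ∑ k ∈ Finset.range (n + 1), p ^ k / (Nat.factorial k : ℂ) * fc a b c (n - k)

section Aux

variable {c : ℂ}

lemma hcadd (hc : ∀ n : ℕ, -c ≠ (n : ℂ)) (n : ℕ) : c + (n : ℂ) ≠ 0 := by
  intro h
  exact hc n (by linear_combination -h)

lemma pochc_ne (hc : ∀ n : ℕ, -c ≠ (n : ℂ)) (n : ℕ) : (ascPochhammer ℂ n).eval c ≠ 0 := by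
  induction n with
  | zero => simp
  | succ n ih =>
    rw [ascPochhammer_succ_eval]
    exact mul_ne_zero ih (hcadd hc n)

lemma fact_ne (n : ℕ) : ((Nat.factorial n : ℕ) : ℂ) ≠ 0 :=
  Nat.cast_ne_zero.mpr n.factorial_ne_zero

lemma fc_rec (hc : ∀ n : ℕ, -c ≠ (n : ℂ)) (a b : ℂ) (n : ℕ) :
    ((n : ℂ) + 1) * (c + (n : ℂ)) * fc a b c (n + 1) = (a + n) * (b + n) * fc a b c n := by
  unfold fc
  rw [ascPochhammer_succ_eval, ascPochhammer_succ_eval, ascPochhammer_succ_eval,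
    Nat.factorial_succ]
  have h1 := pochc_ne hc n
  have h2 := hcadd hc n
  have h3 : ((n : ℂ) + 1) ≠ 0 := Nat.cast_add_one_ne_zero n
  have h4 := fact_ne n
  push_cast
  field_simp

lemma gc_shift1 (a b c p : ℂ) (m : ℕ) :
    p * gc a b c p m
      = ∑ k ∈ Finset.range (m + 2),
          (k : ℂ) * (p ^ k / (Nat.factorial k : ℂ)) * fc a b c (m + 1 - k) := by
  rw [gc, Finset.mul_sum]
  conv_rhs => rw [Finset.sum_range_succ']
  simp only [Nat.cast_zero, zero_mul, add_zero]
  refine Finset.sum_congr rfl fun k hk => ?_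
  have h : m + 1 - (k + 1) = m - k := by omega
  rw [h, Nat.factorial_succ]
  have h4 := fact_ne k
  have h3 : ((k : ℂ) + 1) ≠ 0 := Nat.cast_add_one_ne_zero k
  push_cast
  field_simp
  ring

lemma gc_shift2 (a b c p : ℂ) (m : ℕ) :
    p ^ 2 * gc a b c p m
      = ∑ k ∈ Finset.range (m + 3),
          (k : ℂ) * ((k : ℂ) - 1) * (p ^ k / (Nat.factorial k : ℂ)) * fc a b c (m + 2 - k) := by
  have h1 : p ^ 2 * gc a b c p m = p * (p * gc a b c p m) := by ring
  rw [h1, gc_shift1, Finset.mul_sum]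
  conv_rhs => rw [Finset.sum_range_succ']
  simp only [Nat.cast_zero, zero_mul, add_zero]
  refine Finset.sum_congr rfl fun k hk => ?_
  have h : m + 2 - (k + 1) = m + 1 - k := by omega
  rw [h, Nat.factorial_succ]
  have h4 := fact_ne k
  have h3 : ((k : ℂ) + 1) ≠ 0 := Nat.cast_add_one_ne_zero k
  push_cast
  field_simp
  ring

lemma gc_rec (hc : ∀ n : ℕ, -c ≠ (n : ℂ)) (a b p : ℂ) (m : ℕ) :
    (((m : ℂ) + 2) + 1) * (c + ((m : ℂ) + 2)) * gc a b c p (m + 3)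
      = ((a + ((m : ℂ) + 2)) * (b + ((m : ℂ) + 2)) + p * (c + 2 * ((m : ℂ) + 2)))
            * gc a b c p (m + 2)
        - p * (a + b + 2 * ((m : ℂ) + 2) + p - 1) * gc a b c p (m + 1)
        + p ^ 2 * gc a b c p m := by
  have hg3 : gc a b c p (m + 3)
      = ∑ k ∈ Finset.range (m + 4), p ^ k / (Nat.factorial k : ℂ) * fc a b c (m + 3 - k) := rfl
  have hg2 : gc a b c p (m + 2)
      = ∑ k ∈ Finset.range (m + 3), p ^ k / (Nat.factorial k : ℂ) * fc a b c (m + 2 - k) := rfl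
  have hT1 : p * gc a b c p (m + 2)
      = ∑ k ∈ Finset.range (m + 4),
          (k : ℂ) * (p ^ k / (Nat.factorial k : ℂ)) * fc a b c (m + 3 - k) := gc_shift1 a b c p (m + 2)
  have hS1 : p * gc a b c p (m + 1)
      = ∑ k ∈ Finset.range (m + 3),
          (k : ℂ) * (p ^ k / (Nat.factorial k : ℂ)) * fc a b c (m + 2 - k) := gc_shift1 a b c p (m + 1)
  have hT2 : p ^ 2 * gc a b c p (m + 1)
      = ∑ k ∈ Finset.range (m + 4),
          (k : ℂ) * ((k : ℂ) - 1) * (p ^ k / (Nat.factorial k : ℂ)) * fc a b c (m + 3 - k) := gc_shift2 a b c p (m + 1)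
  have hS2 : p ^ 2 * gc a b c p m
      = ∑ k ∈ Finset.range (m + 3),
          (k : ℂ) * ((k : ℂ) - 1) * (p ^ k / (Nat.factorial k : ℂ)) * fc a b c (m + 2 - k) := gc_shift2 a b c p m
  have E2 : (((m : ℂ) + 2) + 1) * (c + ((m : ℂ) + 2))
          * (∑ k ∈ Finset.range (m + 4), p ^ k / (Nat.factorial k : ℂ) * fc a b c (m + 3 - k))
        - (c + 2 * ((m : ℂ) + 2))
          * (∑ k ∈ Finset.range (m + 4),
              (k : ℂ) * (p ^ k / (Nat.factorial k : ℂ)) * fc a b c (m + 3 - k))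
        + (∑ k ∈ Finset.range (m + 4),
              (k : ℂ) * ((k : ℂ) - 1) * (p ^ k / (Nat.factorial k : ℂ)) * fc a b c (m + 3 - k))
      = (a + ((m : ℂ) + 2)) * (b + ((m : ℂ) + 2))
          * (∑ k ∈ Finset.range (m + 3), p ^ k / (Nat.factorial k : ℂ) * fc a b c (m + 2 - k))
        - (a + b + 2 * ((m : ℂ) + 2) - 1)
          * (∑ k ∈ Finset.range (m + 3),
              (k : ℂ) * (p ^ k / (Nat.factorial k : ℂ)) * fc a b c (m + 2 - k))
        + (∑ k ∈ Finset.range (m + 3),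
              (k : ℂ) * ((k : ℂ) - 1) * (p ^ k / (Nat.factorial k : ℂ)) * fc a b c (m + 2 - k)) := by
    simp only [Finset.mul_sum]
    rw [← Finset.sum_sub_distrib, ← Finset.sum_add_distrib,
      ← Finset.sum_sub_distrib, ← Finset.sum_add_distrib]
    rw [Finset.sum_range_succ]
    have hlast : (((m : ℂ) + 2) + 1) * (c + ((m : ℂ) + 2))
          * (p ^ (m + 3) / (Nat.factorial (m + 3) : ℂ) * fc a b c (m + 3 - (m + 3)))
        - (c + 2 * ((m : ℂ) + 2))
          * (((m + 3 : ℕ) : ℂ) * (p ^ (m + 3) / (Nat.factorial (m + 3) : ℂ)) * fc a b c (m + 3 - (m + 3)))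
        + ((m + 3 : ℕ) : ℂ) * (((m + 3 : ℕ) : ℂ) - 1) * (p ^ (m + 3) / (Nat.factorial (m + 3) : ℂ))
          * fc a b c (m + 3 - (m + 3)) = 0 := by
      push_cast
      ring
    rw [hlast, add_zero]
    refine Finset.sum_congr rfl fun k hk => ?_
    have hk' : k ≤ m + 2 := by
      have := Finset.mem_range.mp hk; omega
    have hidx : m + 3 - k = (m + 2 - k) + 1 := by omega
    have hj : ((m + 2 - k : ℕ) : ℂ) = ((m : ℂ) + 2) - (k : ℂ) := by
      push_cast [Nat.cast_sub hk']
      ring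
    have hrec := fc_rec hc a b (m + 2 - k)
    rw [hj] at hrec
    rw [hidx]
    linear_combination (p ^ k / (Nat.factorial k : ℂ)) * hrec
  linear_combination E2 + (((m : ℂ) + 2) + 1) * (c + ((m : ℂ) + 2)) * hg3
    - (a + ((m : ℂ) + 2)) * (b + ((m : ℂ) + 2)) * hg2
    - (c + 2 * ((m : ℂ) + 2)) * hT1
    + (a + b + 2 * ((m : ℂ) + 2) - 1) * hS1
    + hT2 - hS2


lemma poch2eval (x : ℂ) : (ascPochhammer ℂ 2).eval x = x * (x + 1) := by
  rw [show (2:ℕ) = 1 + 1 from rfl, ascPochhammer_succ_eval, ascPochhammer_one]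
  simp

lemma fc0 (a b : ℂ) : fc a b c 0 = 1 := by simp [fc]

lemma fc1 (a b : ℂ) : fc a b c 1 = a * b / c := by simp [fc]

lemma fc2 (a b : ℂ) : fc a b c 2 = a * (a + 1) * (b * (b + 1)) / (c * (c + 1) * 2) := by
  simp [fc, poch2eval]

lemma gc0 (a b p : ℂ) : gc a b c p 0 = 1 := by
  simp [gc, fc0]

lemma gc1 (a b p : ℂ) : gc a b c p 1 = a * b / c + p := by
  rw [gc, Finset.sum_range_succ, Finset.sum_range_succ, Finset.sum_range_zero]
  norm_num [fc0, fc1]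

lemma gc2 (hc : ∀ n : ℕ, -c ≠ (n : ℂ)) (a b p : ℂ) :
    gc a b c p 2 = a * (1 + a) * b * (1 + b) / (2 * c * (1 + c)) + a * b * p / c + p ^ 2 / 2 := by
  have hc0 : c ≠ 0 := by simpa using hcadd hc 0
  have hc1 : c + 1 ≠ 0 := by
    have := hcadd hc 1; simpa using this
  rw [gc, Finset.sum_range_succ, Finset.sum_range_succ, Finset.sum_range_succ,
    Finset.sum_range_zero]
  have h1' : (1 : ℂ) + c ≠ 0 := by simpa [add_comm] using hcadd hc 1
  norm_num [fc0, fc1, fc2, Nat.factorial]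
  field_simp [hc0, hc1, h1']
  ring

lemma eq_gc (hc : ∀ n : ℕ, -c ≠ (n : ℂ)) (a b p : ℂ) (w : ℕ → ℂ)
    (h0 : w 0 = 1) (h1 : w 1 = a * b / c + p)
    (h2 : w 2 = a * (1 + a) * b * (1 + b) / (2 * c * (1 + c)) + a * b * p / c + p ^ 2 / 2)
    (hrec : ∀ n : ℕ, 2 ≤ n →
      w (n + 1) = ((a + (n : ℂ)) * (b + (n : ℂ)) + p * (c + 2 * (n : ℂ))) /
          (((n : ℂ) + 1) * (c + (n : ℂ))) * w n
        - p * (a + b + 2 * (n : ℂ) + p - 1) / (((n : ℂ) + 1) * (c + (n : ℂ))) * w (n - 1)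
        + p ^ 2 / (((n : ℂ) + 1) * (c + (n : ℂ))) * w (n - 2)) :
    ∀ n, w n = gc a b c p n := by
  intro n
  induction n using Nat.strong_induction_on with
  | _ n ih =>
    match n with
    | 0 => rw [h0, gc0]
    | 1 => rw [h1, gc1]
    | 2 => rw [h2, gc2 hc]
    | (m + 3) =>
      have e1 := hrec (m + 2) (by omega)
      have i0 := ih m (by omega)
      have i1 := ih (m + 1) (by omega)
      have i2 := ih (m + 2) (by omega)
      have hn1 : m + 2 - 1 = m + 1 := rfl
      have hn2 : m + 2 - 2 = m := rfl
      rw [hn1, hn2, i0, i1, i2] at e1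
      rw [e1]
      have key := gc_rec hc a b p m
      have hD1 : ((m : ℂ) + 2) + 1 ≠ 0 := by
        have : (((m + 3 : ℕ) : ℂ)) ≠ 0 := Nat.cast_ne_zero.mpr (by omega)
        push_cast at this
        intro h; apply this; linear_combination h
      have hD2 : c + ((m : ℂ) + 2) ≠ 0 := by
        have := hcadd hc (m + 2); push_cast at this; exact this
      push_cast
      field_simp
      linear_combination -key
lemma inv_nat_tendsto : Tendsto (fun n : ℕ => ((n : ℂ) + 1)⁻¹) atTop (nhds 0) := by
  apply squeeze_zero_norm (a := fun n : ℕ => 1 / ((n : ℝ) + 1))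
  · intro n
    rw [norm_inv, show ((n : ℂ) + 1) = ((n + 1 : ℕ) : ℂ) by push_cast; ring,
      Complex.norm_natCast, one_div]
    push_cast
    exact le_refl _
  · exact tendsto_one_div_add_atTop_nhds_zero_nat

lemma inv_c_add_tendsto : Tendsto (fun n : ℕ => (c + (n : ℂ))⁻¹) atTop (nhds 0) := by
  apply squeeze_zero_norm' (a := fun n : ℕ => 2 / (n : ℝ))
  · filter_upwards [Filter.eventually_ge_atTop (⌈2 * ‖c‖⌉₊ + 1)] with n hn
    have hc2 : 2 * ‖c‖ ≤ (n : ℝ) := by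
      calc 2 * ‖c‖ ≤ (⌈2 * ‖c‖⌉₊ : ℝ) := Nat.le_ceil _
        _ ≤ (n : ℝ) := by exact_mod_cast Nat.le_of_succ_le hn
    have hn1 : (1 : ℝ) ≤ (n : ℝ) := by
      have : 1 ≤ n := by omega
      exact_mod_cast this
    have hpos : (0 : ℝ) < (n : ℝ) / 2 := by linarith
    have hlow : (n : ℝ) / 2 ≤ ‖c + (n : ℂ)‖ := by
      have h1 : ‖(n : ℂ)‖ - ‖-c‖ ≤ ‖(n : ℂ) - (-c)‖ := norm_sub_norm_le _ _
      have h2 : ‖(n : ℂ)‖ = (n : ℝ) := by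
        rw [Complex.norm_natCast]
      have h3 : ((n : ℂ) - (-c)) = c + n := by ring
      rw [h2, h3, norm_neg] at h1
      linarith
    rw [norm_inv]
    calc ‖c + (n : ℂ)‖⁻¹ ≤ ((n : ℝ) / 2)⁻¹ := by gcongr
      _ = 2 / (n : ℝ) := by rw [inv_div]
  · exact tendsto_const_div_atTop_nhds_zero_nat 2

lemma ratio_tendsto (hc : ∀ n : ℕ, -c ≠ (n : ℂ)) (a b : ℂ) :
    Tendsto (fun n : ℕ => ‖(a + (n : ℂ)) * (b + (n : ℂ)) / (((n : ℂ) + 1) * (c + (n : ℂ)))‖)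
      atTop (nhds 1) := by
  have h3 : Tendsto (fun n : ℕ => (a + (n : ℂ)) / ((n : ℂ) + 1)) atTop (nhds 1) := by
    have heq : (fun n : ℕ => (a + (n : ℂ)) / ((n : ℂ) + 1))
        = fun n : ℕ => 1 + (a - 1) * ((n : ℂ) + 1)⁻¹ := by
      funext n
      have hne : ((n : ℂ) + 1) ≠ 0 := Nat.cast_add_one_ne_zero n
      field_simp
      ring
    rw [heq]
    have := (tendsto_const_nhds (x := (1:ℂ)) (f := atTop (α := ℕ))).add
      (inv_nat_tendsto.const_mul (a - 1))
    simpa using this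
  have h4 : Tendsto (fun n : ℕ => (b + (n : ℂ)) / (c + (n : ℂ))) atTop (nhds 1) := by
    have heq : (fun n : ℕ => (b + (n : ℂ)) / (c + (n : ℂ)))
        = fun n : ℕ => 1 + (b - c) * (c + (n : ℂ))⁻¹ := by
      funext n
      have hne : (c + (n : ℂ)) ≠ 0 := hcadd hc n
      field_simp
      ring
    rw [heq]
    have := (tendsto_const_nhds (x := (1:ℂ)) (f := atTop (α := ℕ))).add
      ((inv_c_add_tendsto (c := c)).const_mul (b - c))
    simpa using this
  have h5 : Tendsto (fun n : ℕ => (a + (n : ℂ)) * (b + (n : ℂ)) / (((n : ℂ) + 1) * (c + (n : ℂ))))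
      atTop (nhds 1) := by
    have heq : (fun n : ℕ => (a + (n : ℂ)) * (b + (n : ℂ)) / (((n : ℂ) + 1) * (c + (n : ℂ))))
        = fun n : ℕ => ((a + (n : ℂ)) / ((n : ℂ) + 1)) * ((b + (n : ℂ)) / (c + (n : ℂ))) := by
      funext n
      rw [mul_div_mul_comm]
    rw [heq]
    simpa using h3.mul h4
  simpa using h5.norm

lemma f_term_summable (hc : ∀ n : ℕ, -c ≠ (n : ℂ)) (a b z : ℂ) (hz : ‖z‖ < 1) :
    Summable (fun n : ℕ => ‖fc a b c n * z ^ n‖) := by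
  set r : ℝ := (1 + ‖z‖) / 2 with hr
  have hr1 : r < 1 := by rw [hr]; linarith
  have hzr : ‖z‖ < r := by rw [hr]; linarith
  apply summable_of_ratio_norm_eventually_le hr1
  have htend : Tendsto
      (fun n : ℕ => ‖(a + (n : ℂ)) * (b + (n : ℂ)) / (((n : ℂ) + 1) * (c + (n : ℂ)))‖ * ‖z‖)
      atTop (nhds (1 * ‖z‖)) := (ratio_tendsto hc a b).mul_const ‖z‖
  rw [one_mul] at htend
  have hev := htend.eventually_lt_const hzr
  filter_upwards [hev] with n hn
  rw [norm_norm, norm_norm]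
  have hden : ((n : ℂ) + 1) * (c + (n : ℂ)) ≠ 0 :=
    mul_ne_zero (Nat.cast_add_one_ne_zero n) (hcadd hc n)
  have hfrec : fc a b c (n + 1)
      = (a + (n : ℂ)) * (b + (n : ℂ)) / (((n : ℂ) + 1) * (c + (n : ℂ))) * fc a b c n := by
    have h1 : ((n : ℂ) + 1) ≠ 0 := Nat.cast_add_one_ne_zero n
    have h2 : c + (n : ℂ) ≠ 0 := hcadd hc n
    field_simp
    linear_combination fc_rec hc a b n
  calc ‖fc a b c (n + 1) * z ^ (n + 1)‖
      = (‖(a + (n : ℂ)) * (b + (n : ℂ)) / (((n : ℂ) + 1) * (c + (n : ℂ)))‖ * ‖z‖)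
        * ‖fc a b c n * z ^ n‖ := by
        rw [hfrec, pow_succ]
        rw [norm_mul, norm_mul, norm_mul, norm_mul]
        ring
    _ ≤ r * ‖fc a b c n * z ^ n‖ :=
        mul_le_mul_of_nonneg_right hn.le (norm_nonneg _)

lemma e_term_summable (p z : ℂ) :
    Summable (fun n : ℕ => ‖p ^ n / (Nat.factorial n : ℂ) * z ^ n‖) := by
  have heq : ∀ n : ℕ, ‖p ^ n / (Nat.factorial n : ℂ) * z ^ n‖
      = ‖p * z‖ ^ n / (Nat.factorial n : ℝ) := by
    intro n
    rw [norm_mul, norm_div, norm_pow, norm_pow, Complex.norm_natCast, norm_mul, mul_pow]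
    ring
  simp only [heq]
  exact Real.summable_pow_div_factorial _

lemma tsum_e (p z : ℂ) :
    ∑' n : ℕ, p ^ n / (Nat.factorial n : ℂ) * z ^ n = Complex.exp (p * z) := by
  rw [Complex.exp_eq_exp_ℂ, NormedSpace.exp_eq_tsum_div]
  exact tsum_congr fun n => by rw [mul_pow]; ring

lemma gc_tsum (hc : ∀ n : ℕ, -c ≠ (n : ℂ)) (a b p z : ℂ) (hz : ‖z‖ < 1) :
    Summable (fun n : ℕ => gc a b c p n * z ^ n) ∧
      ∑' n : ℕ, gc a b c p n * z ^ n = Complex.exp (p * z) * F a b c z := by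
  set E : ℕ → ℂ := fun n => p ^ n / (Nat.factorial n : ℂ) * z ^ n with hE_def
  set Fz : ℕ → ℂ := fun n => fc a b c n * z ^ n with hFz_def
  have hE : Summable fun n => ‖E n‖ := e_term_summable p z
  have hF : Summable fun n => ‖Fz n‖ := f_term_summable hc a b z hz
  have hconv : ∀ n : ℕ, ∑ kl ∈ Finset.HasAntidiagonal.antidiagonal n, E kl.1 * Fz kl.2
      = gc a b c p n * z ^ n := by
    intro n
    rw [Finset.Nat.sum_antidiagonal_eq_sum_range_succ_mk, gc, Finset.sum_mul]
    refine Finset.sum_congr rfl fun k hk => ?_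
    have hk' : k ≤ n := by
      have := Finset.mem_range.mp hk; omega
    have hzp : z ^ n = z ^ k * z ^ (n - k) := by
      rw [← pow_add]; congr 1; omega
    simp only [hE_def, hFz_def]
    rw [hzp]; ring
  constructor
  · have hs := summable_sum_mul_antidiagonal_of_summable_norm' hE hE.of_norm hF hF.of_norm
    simpa only [hconv] using hs
  · have hmul := tsum_mul_tsum_eq_tsum_sum_antidiagonal_of_summable_norm hE hF
    have h1 : ∑' n : ℕ, E n = Complex.exp (p * z) := tsum_e p z
    have h2 : ∑' n : ℕ, Fz n = F a b c z := rfl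
    rw [tsum_congr hconv] at hmul
    rw [← hmul, h1, h2]

theorem stmt11 (a b c p : ℂ) (hc : ∀ n : ℕ, -c ≠ (n : ℂ))
    (u v : ℕ → ℂ)
    (hu0 : u 0 = 1) (hu1 : u 1 = a * b / c + p)
    (hu2 : u 2 = a * (1 + a) * b * (1 + b) / (2 * c * (1 + c)) + a * b * p / c + p ^ 2 / 2)
    (hv0 : v 0 = 1) (hv1 : v 1 = a * b / c - p)
    (hv2 : v 2 = a * (1 + a) * b * (1 + b) / (2 * c * (1 + c)) - a * b * p / c + p ^ 2 / 2)
    (hrecu : ∀ n : ℕ, 2 ≤ n →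
      u (n + 1) = ((a + (n : ℂ)) * (b + (n : ℂ)) + p * (c + 2 * (n : ℂ))) /
          (((n : ℂ) + 1) * (c + (n : ℂ))) * u n
        - p * (a + b + 2 * (n : ℂ) + p - 1) / (((n : ℂ) + 1) * (c + (n : ℂ))) * u (n - 1)
        + p ^ 2 / (((n : ℂ) + 1) * (c + (n : ℂ))) * u (n - 2))
    (hrecv : ∀ n : ℕ, 2 ≤ n →
      v (n + 1) = ((a + (n : ℂ)) * (b + (n : ℂ)) - p * (c + 2 * (n : ℂ))) /
          (((n : ℂ) + 1) * (c + (n : ℂ))) * v n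
        + p * (a + b + 2 * (n : ℂ) - p - 1) / (((n : ℂ) + 1) * (c + (n : ℂ))) * v (n - 1)
        + p ^ 2 / (((n : ℂ) + 1) * (c + (n : ℂ))) * v (n - 2)) :
    ∀ z : ℂ, ‖z‖ < 1 → Complex.sinh (p * z) * F a b c z = ∑' n : ℕ, (u n - v n) / 2 * z ^ n := by
  intro z hz
  have hu := eq_gc hc a b p u hu0 hu1 hu2 hrecu
  have hv1' : v 1 = a * b / c + -p := by rw [hv1]; ring
  have hv2' : v 2 = a * (1 + a) * b * (1 + b) / (2 * c * (1 + c)) + a * b * (-p) / c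
      + (-p) ^ 2 / 2 := by rw [hv2]; ring
  have hrecv' : ∀ n : ℕ, 2 ≤ n →
      v (n + 1) = ((a + (n : ℂ)) * (b + (n : ℂ)) + (-p) * (c + 2 * (n : ℂ))) /
          (((n : ℂ) + 1) * (c + (n : ℂ))) * v n
        - (-p) * (a + b + 2 * (n : ℂ) + (-p) - 1) / (((n : ℂ) + 1) * (c + (n : ℂ))) * v (n - 1)
        + (-p) ^ 2 / (((n : ℂ) + 1) * (c + (n : ℂ))) * v (n - 2) := by
    intro n hn
    rw [hrecv n hn]
    ring
  have hv := eq_gc hc a b (-p) v hv0 hv1' hv2' hrecv'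
  obtain ⟨hsumU, htU⟩ := gc_tsum hc a b p z hz
  obtain ⟨hsumV, htV⟩ := gc_tsum hc a b (-p) z hz
  rw [show (-p) * z = -(p * z) by ring] at htV
  have hterm : ∀ n : ℕ, (u n - v n) / 2 * z ^ n
      = (gc a b c p n * z ^ n - gc a b c (-p) n * z ^ n) / 2 := by
    intro n; rw [hu n, hv n]; ring
  rw [tsum_congr hterm, tsum_div_const, Summable.tsum_sub hsumU hsumV, htU, htV, Complex.sinh]
  ring

end Aux
end

section
/- Let a, b, c, p ∈ ℂ with −c ∉ ℕ ∪ {0}, and let i denote the imaginary unit. Define sequences (u_n) and (v_n) by u_0 = 1, u_1 = ab/c + ip, u_2 = iabp/c + a(a+1)b(b+1)/(2c(c+1)) − p²/2, v_0 = 1, v_1 = ab/c − ip, v_2 = −iabp/c + a(a+1)b(b+1)/(2c(c+1)) − p²/2, and for n ≥ 2: u_{n+1} = (((a+n)(b+n) + ip(c+2n))/((n+1)(c+n))) u_n + (p(p − i(a+b+2n−1))/((n+1)(c+n))) u_{n−1} − (p²/((n+1)(c+n))) u_{n−2}, and v_{n+1} = (((a+n)(b+n) − ip(c+2n))/((n+1)(c+n)))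 v_n + (p(p + i(a+b+2n−1))/((n+1)(c+n))) v_{n−1} − (p²/((n+1)(c+n))) v_{n−2}. Then cos(pz) F(a,b;c;z) = ∑_{n=0}^∞ ((u_n + v_n)/2) z^n for |z| < 1. -/
open Complex Finset Polynomial

noncomputable def Acoef (a b c : ℂ) (n : ℕ) : ℂ :=
  (ascPochhammer ℂ n).eval a * (ascPochhammer ℂ n).eval b /
    ((ascPochhammer ℂ n).eval c * (Nat.factorial n : ℂ))

noncomputable def Wser (a b c t : ℂ) (n : ℕ) : ℂ :=
  ∑ k ∈ Finset.range (n + 1), t ^ k / (Nat.factorial k : ℂ) * Acoef a b c (n - k)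

noncomputable def Dser (a b c t : ℂ) (n : ℕ) : ℂ :=
  ∑ k ∈ Finset.range (n + 1), t ^ k / (Nat.factorial k : ℂ) * (k : ℂ) * Acoef a b c (n - k)

noncomputable def Eser (a b c t : ℂ) (n : ℕ) : ℂ :=
  ∑ k ∈ Finset.range (n + 1), t ^ k / (Nat.factorial k : ℂ) * ((k : ℂ) * ((k : ℂ) - 1)) * Acoef a b c (n - k)

lemma poch_ne_zero {c : ℂ} (hc : ∀ n : ℕ, -c ≠ (n : ℂ)) (n : ℕ) :
    (ascPochhammer ℂ n).eval c ≠ 0 := by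
  induction n with
  | zero => simp
  | succ m ih =>
    rw [ascPochhammer_succ_eval]
    refine mul_ne_zero ih ?_
    intro h
    exact hc m (by linear_combination -h)

lemma Acoef_rec {a b c : ℂ} (hc : ∀ n : ℕ, -c ≠ (n : ℂ)) (m : ℕ) :
    ((m : ℂ) + 1) * (c + m) * Acoef a b c (m + 1) = (a + m) * (b + m) * Acoef a b c m := by
  have h1 := poch_ne_zero hc m
  have h2 := poch_ne_zero hc (m + 1)
  have h3 : ((Nat.factorial m : ℂ)) ≠ 0 := Nat.cast_ne_zero.2 (Nat.factorial_ne_zero m)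
  have h4 : ((Nat.factorial (m+1) : ℂ)) ≠ 0 := Nat.cast_ne_zero.2 (Nat.factorial_ne_zero _)
  have hcm : c + (m : ℂ) ≠ 0 := by
    intro h; exact hc m (by linear_combination -h)
  simp only [Acoef, ascPochhammer_succ_eval, Nat.factorial_succ, Nat.cast_mul, Nat.cast_add,
    Nat.cast_one]
  rw [mul_div_assoc', mul_div_assoc', div_eq_div_iff
    (mul_ne_zero (mul_ne_zero h1 hcm) (mul_ne_zero (Nat.cast_add_one_ne_zero m) h3))
    (mul_ne_zero h1 h3)]
  ring

lemma tW_eq_D (a b c t : ℂ) (N : ℕ) : t * Wser a b c t N = Dser a b c t (N + 1) := by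
  symm
  rw [Dser, Finset.sum_range_succ', Wser, Finset.mul_sum]
  simp only [Nat.cast_zero, pow_zero, Nat.factorial_zero, Nat.cast_one, mul_zero, zero_mul,
    add_zero, Nat.succ_sub_succ]
  refine Finset.sum_congr rfl fun k _ => ?_
  have hk : ((Nat.factorial k : ℂ)) ≠ 0 := Nat.cast_ne_zero.2 (Nat.factorial_ne_zero k)
  have hk1 : ((k : ℂ) + 1) ≠ 0 := Nat.cast_add_one_ne_zero k
  rw [Nat.factorial_succ]
  push_cast
  field_simp
  ring

lemma tD_eq_E (a b c t : ℂ) (N : ℕ) : t * Dser a b c t N = Eser a b c t (N + 1) := by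
  symm
  rw [Eser, Finset.sum_range_succ', Dser, Finset.mul_sum]
  simp only [Nat.cast_zero, pow_zero, Nat.factorial_zero, Nat.cast_one, mul_zero, zero_mul,
    zero_sub, add_zero, Nat.succ_sub_succ, zero_mul, mul_zero, neg_zero, mul_neg]
  refine Finset.sum_congr rfl fun k _ => ?_
  have hk : ((Nat.factorial k : ℂ)) ≠ 0 := Nat.cast_ne_zero.2 (Nat.factorial_ne_zero k)
  have hk1 : ((k : ℂ) + 1) ≠ 0 := Nat.cast_add_one_ne_zero k
  rw [Nat.factorial_succ]
  push_cast
  field_simp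
  ring

lemma Wser_rec {a b c : ℂ} (hc : ∀ n : ℕ, -c ≠ (n : ℂ)) (t : ℂ) (n : ℕ) :
    ((n : ℂ) + 1) * (c + n) * Wser a b c t (n + 1) =
      (a + n) * (b + n) * Wser a b c t n + (c + 2 * n) * Dser a b c t (n + 1)
        - (a + b + 2 * n - 1) * Dser a b c t n - Eser a b c t (n + 1) + Eser a b c t n := by
  have L : ((n : ℂ) + 1) * (c + n) * Wser a b c t (n + 1) - (c + 2 * n) * Dser a b c t (n + 1)
      + Eser a b c t (n + 1)
      = ∑ k ∈ Finset.range (n + 2), ((n : ℂ) + 1 - k) * (c + n - k) *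
          (t ^ k / (Nat.factorial k : ℂ) * Acoef a b c (n + 1 - k)) := by
    rw [Wser, Dser, Eser, Finset.mul_sum, Finset.mul_sum, ← Finset.sum_sub_distrib,
      ← Finset.sum_add_distrib]
    refine Finset.sum_congr rfl fun k _ => ?_
    ring
  have R : (a + n) * (b + n) * Wser a b c t n - (a + b + 2 * n - 1) * Dser a b c t n
      + Eser a b c t n
      = ∑ k ∈ Finset.range (n + 1), (a + n - k) * (b + n - k) *
          (t ^ k / (Nat.factorial k : ℂ) * Acoef a b c (n - k)) := by
    rw [Wser, Dser, Eser, Finset.mul_sum, Finset.mul_sum, ← Finset.sum_sub_distrib,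
      ← Finset.sum_add_distrib]
    refine Finset.sum_congr rfl fun k _ => ?_
    ring
  have hLR : ∑ k ∈ Finset.range (n + 2), ((n : ℂ) + 1 - k) * (c + n - k) *
        (t ^ k / (Nat.factorial k : ℂ) * Acoef a b c (n + 1 - k))
      = ∑ k ∈ Finset.range (n + 1), (a + n - k) * (b + n - k) *
        (t ^ k / (Nat.factorial k : ℂ) * Acoef a b c (n - k)) := by
    rw [Finset.sum_range_succ]
    have hz : ((n : ℂ) + 1 - ((n + 1 : ℕ) : ℂ)) = 0 := by push_cast; ring
    rw [hz, zero_mul, zero_mul, add_zero]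
    refine Finset.sum_congr rfl fun k hk => ?_
    have hkn : k ≤ n := Nat.lt_succ_iff.mp (Finset.mem_range.mp hk)
    have h1 : ((n - k : ℕ) : ℂ) = (n : ℂ) - k := by
      push_cast [Nat.cast_sub hkn]; ring
    have h2 : n + 1 - k = (n - k) + 1 := by omega
    have := Acoef_rec (a := a) (b := b) hc (n - k)
    rw [h1] at this
    rw [h2]
    linear_combination (t ^ k / (Nat.factorial k : ℂ)) * this
  linear_combination L - R + hLR

lemma Wser_zero (a b c t : ℂ) : Wser a b c t 0 = 1 := by
  simp [Wser, Acoef]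

lemma Wser_one (a b c t : ℂ) : Wser a b c t 1 = a * b / c + t := by
  simp [Wser, Acoef, Finset.sum_range_succ, ascPochhammer_one]

lemma Wser_two (a b c t : ℂ) :
    Wser a b c t 2 = a * (a + 1) * b * (b + 1) / (2 * c * (c + 1)) + t * (a * b / c) + t ^ 2 / 2 := by
  have e2 : ∀ x : ℂ, (ascPochhammer ℂ 2).eval x = x * (x + 1) := by
    intro x
    rw [show (2 : ℕ) = 1 + 1 from rfl, ascPochhammer_succ_eval, ascPochhammer_one]
    simp
  simp [Wser, Acoef, Finset.sum_range_succ, e2, ascPochhammer_one, Nat.factorial]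
  ring

lemma Wser_rec_div {a b c : ℂ} (hc : ∀ n : ℕ, -c ≠ (n : ℂ)) (t : ℂ) (n : ℕ) (hn : 2 ≤ n) :
    Wser a b c t (n + 1) =
      ((a + n) * (b + n) + t * (c + 2 * n)) / (((n : ℂ) + 1) * (c + n)) * Wser a b c t n
      + (-(t ^ 2) - t * (a + b + 2 * n - 1)) / (((n : ℂ) + 1) * (c + n)) * Wser a b c t (n - 1)
      + t ^ 2 / (((n : ℂ) + 1) * (c + n)) * Wser a b c t (n - 2) := by
  obtain ⟨m, rfl⟩ : ∃ m, n = m + 2 := ⟨n - 2, by omega⟩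
  have hcn : c + ((m + 2 : ℕ) : ℂ) ≠ 0 := by
    intro h; exact hc (m + 2) (by linear_combination -h)
  have hn1 : (((m + 2 : ℕ) : ℂ) + 1) ≠ 0 := by
    have h3 : ((m + 3 : ℕ) : ℂ) ≠ 0 := Nat.cast_ne_zero.mpr (by omega)
    intro h; apply h3; push_cast at h ⊢; linear_combination h
  have key := Wser_rec (a := a) (b := b) hc t (m + 2)
  have hd1 := tW_eq_D a b c t (m + 2)
  have hd2 := tW_eq_D a b c t (m + 1)
  have hd3 := tW_eq_D a b c t m
  have he1 := tD_eq_E a b c t (m + 2)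
  have he2 := tD_eq_E a b c t (m + 1)
  have hD : ((((m + 2 : ℕ)) : ℂ) + 1) * (c + ((m + 2 : ℕ) : ℂ)) ≠ 0 := mul_ne_zero hn1 hcn
  rw [show m + 2 - 1 = m + 1 from rfl, show m + 2 - 2 = m from rfl]
  simp only [show m + 2 + 1 = m + 3 from rfl, show m + 1 + 1 = m + 2 from rfl] at key hd1 hd2 hd3 he1 he2 ⊢
  rw [div_mul_eq_mul_div, div_mul_eq_mul_div, div_mul_eq_mul_div, ← add_div,
    ← add_div, eq_div_iff hD]
  linear_combination key - (c + 2 * ((m + 2 : ℕ) : ℂ)) * hd1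
    + (a + b + 2 * ((m + 2 : ℕ) : ℂ) - 1) * hd2 + he1 + t * hd2 - he2 - t * hd3

lemma eq_Wser {a b c : ℂ} (hc : ∀ n : ℕ, -c ≠ (n : ℂ)) (t : ℂ) (u : ℕ → ℂ)
    (h0 : u 0 = Wser a b c t 0) (h1 : u 1 = Wser a b c t 1) (h2 : u 2 = Wser a b c t 2)
    (hrec : ∀ n : ℕ, 2 ≤ n → u (n + 1) =
      ((a + n) * (b + n) + t * (c + 2 * n)) / (((n : ℂ) + 1) * (c + n)) * u n
      + (-(t ^ 2) - t * (a + b + 2 * n - 1)) / (((n : ℂ) + 1) * (c + n)) * u (n - 1)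
      + t ^ 2 / (((n : ℂ) + 1) * (c + n)) * u (n - 2)) :
    ∀ n, u n = Wser a b c t n := by
  intro n
  induction n using Nat.strong_induction_on with
  | _ n ih =>
    match n, ih with
    | 0, _ => exact h0
    | 1, _ => exact h1
    | 2, _ => exact h2
    | (m + 3), ih =>
      have h2m : 2 ≤ m + 2 := by omega
      rw [show m + 3 = (m + 2) + 1 from rfl, hrec (m + 2) h2m,
        Wser_rec_div hc t (m + 2) h2m,
        show (m + 2) - 1 = m + 1 from rfl, show (m + 2) - 2 = m from rfl,
        ih (m + 2) (by omega), ih (m + 1) (by omega), ih m (by omega)]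

open Filter in
lemma tendsto_shift_ratio (w v : ℂ) (hv : ∀ n : ℕ, v + (n : ℂ) ≠ 0) :
    Tendsto (fun n : ℕ => (w + n) / (v + n)) atTop (nhds 1) := by
  have h0 : Tendsto (fun n : ℕ => (w - v) / (v + n)) atTop (nhds 0) := by
    rw [tendsto_zero_iff_norm_tendsto_zero]
    have hb : Tendsto (fun n : ℕ => ‖w - v‖ / ((n : ℝ) - ‖v‖)) atTop (nhds 0) :=
      Tendsto.div_atTop tendsto_const_nhds
        (tendsto_atTop_add_const_right _ (-‖v‖) tendsto_natCast_atTop_atTop)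
    refine squeeze_zero' (Eventually.of_forall fun n => norm_nonneg _) ?_ hb
    filter_upwards [eventually_ge_atTop (⌈‖v‖⌉₊ + 1)] with n hn
    have h1 : ‖v‖ + 1 ≤ (n : ℝ) := by
      have h2 : ‖v‖ ≤ (⌈‖v‖⌉₊ : ℝ) := Nat.le_ceil _
      have h3 : ((⌈‖v‖⌉₊ + 1 : ℕ) : ℝ) ≤ (n : ℝ) := Nat.cast_le.mpr hn
      push_cast at h3; linarith
    have h4 : (n : ℝ) - ‖v‖ ≤ ‖v + n‖ := by
      have := norm_sub_norm_le ((n : ℂ)) (-v)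
      simp only [norm_neg, sub_neg_eq_add] at this
      calc (n : ℝ) - ‖v‖ = ‖(n : ℂ)‖ - ‖v‖ := by rw [Complex.norm_natCast]
        _ ≤ ‖(n : ℂ) + v‖ := this
        _ = ‖v + n‖ := by rw [add_comm]
    rw [norm_div]
    exact div_le_div_of_nonneg_left (norm_nonneg _) (by linarith) h4
  have he : (fun n : ℕ => (w + n) / (v + n)) = fun n : ℕ => 1 + (w - v) / (v + n) := by
    funext n
    have h := hv n
    field_simp
    ring
  rw [he]
  simpa using tendsto_const_nhds.add h0

open Filter in
lemma Acoef_norm_summable {a b c : ℂ} (hc : ∀ n : ℕ, -c ≠ (n : ℂ)) {z : ℂ} (hz : ‖z‖ < 1) :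
    Summable (fun n => ‖Acoef a b c n * z ^ n‖) := by
  set r : ℝ := (1 + ‖z‖) / 2 with hr
  have hr1 : r < 1 := by rw [hr]; linarith
  have hzr : ‖z‖ < r := by rw [hr]; linarith
  set q : ℕ → ℂ := fun n => (a + n) * (b + n) / (((n : ℂ) + 1) * (c + n)) with hq
  have hqt : Tendsto (fun n : ℕ => ‖q n‖ * ‖z‖) atTop (nhds ‖z‖) := by
    have h1 := tendsto_shift_ratio a 1 (fun n => by
      have : ((n + 1 : ℕ) : ℂ) ≠ 0 := Nat.cast_ne_zero.mpr (by omega)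
      intro h; apply this; push_cast; linear_combination h)
    have h2 := tendsto_shift_ratio b c (fun n => by
      intro h; exact hc n (by linear_combination -h))
    have he : q = fun n : ℕ => (a + n) / (1 + n) * ((b + n) / (c + n)) := by
      funext n; rw [hq, div_mul_div_comm]; ring_nf
    have h3 : Tendsto (fun n : ℕ => ‖q n‖) atTop (nhds ‖(1 : ℂ) * 1‖) := by
      simp only [he]; exact ((h1.mul h2).norm)
    simpa using h3.mul_const ‖z‖
  have hev : ∀ᶠ n : ℕ in atTop, ‖q n‖ * ‖z‖ ≤ r := hqt.eventually_le_const hzr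
  apply summable_of_ratio_norm_eventually_le hr1
  filter_upwards [hev] with n hn
  have hcn : c + (n : ℂ) ≠ 0 := fun h => hc n (by linear_combination -h)
  have hn1 : ((n : ℂ) + 1) ≠ 0 := Nat.cast_add_one_ne_zero n
  have hA : Acoef a b c (n + 1) = q n * Acoef a b c n := by
    rw [hq, div_mul_eq_mul_div, eq_div_iff (mul_ne_zero hn1 hcn)]
    linear_combination Acoef_rec (a := a) (b := b) hc n
  have heq : Acoef a b c (n + 1) * z ^ (n + 1) = q n * z * (Acoef a b c n * z ^ n) := by
    rw [hA, pow_succ]; ring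
  rw [norm_norm, norm_norm, heq, norm_mul, norm_mul]
  exact mul_le_mul_of_nonneg_right hn (norm_nonneg _)

lemma exp_mul_F {a b c : ℂ} (hc : ∀ n : ℕ, -c ≠ (n : ℂ)) (t : ℂ) {z : ℂ} (hz : ‖z‖ < 1) :
    Complex.exp (t * z) * F a b c z = ∑' n : ℕ, Wser a b c t n * z ^ n ∧
      Summable (fun n : ℕ => Wser a b c t n * z ^ n) := by
  have hf : Summable (fun k : ℕ => ‖(t * z) ^ k / (Nat.factorial k : ℂ)‖) :=
    NormedSpace.norm_expSeries_div_summable (t * z)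
  have hg : Summable (fun n : ℕ => ‖Acoef a b c n * z ^ n‖) := Acoef_norm_summable hc hz
  have hterm : ∀ n : ℕ,
      ∑ kl ∈ Finset.HasAntidiagonal.antidiagonal n, (t * z) ^ kl.1 / (Nat.factorial kl.1 : ℂ) *
        (Acoef a b c kl.2 * z ^ kl.2) = Wser a b c t n * z ^ n := by
    intro n
    rw [Finset.Nat.sum_antidiagonal_eq_sum_range_succ_mk, Wser, Finset.sum_mul]
    refine Finset.sum_congr rfl fun k hk => ?_
    have hkn : k ≤ n := Nat.lt_succ_iff.mp (Finset.mem_range.mp hk)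
    have hzp : z ^ k * z ^ (n - k) = z ^ n := by
      rw [← pow_add]; congr 1; omega
    rw [mul_pow]
    calc t ^ k * z ^ k / (Nat.factorial k : ℂ) * (Acoef a b c (n - k) * z ^ (n - k))
        = t ^ k / (Nat.factorial k : ℂ) * Acoef a b c (n - k) * (z ^ k * z ^ (n - k)) := by ring
      _ = t ^ k / (Nat.factorial k : ℂ) * Acoef a b c (n - k) * z ^ n := by rw [hzp]
  constructor
  · have hexp : Complex.exp (t * z) = ∑' k : ℕ, (t * z) ^ k / (Nat.factorial k : ℂ) := by
      rw [Complex.exp_eq_exp_ℂ, NormedSpace.exp_eq_tsum_div]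
    have hF : F a b c z = ∑' n : ℕ, Acoef a b c n * z ^ n := rfl
    rw [hexp, hF, tsum_mul_tsum_eq_tsum_sum_antidiagonal_of_summable_norm hf hg]
    exact tsum_congr hterm
  · have := (summable_norm_sum_mul_antidiagonal_of_summable_norm hf hg).of_norm
    refine this.congr fun n => ?_
    exact hterm n

theorem stmt14 (a b c p : ℂ) (hc : ∀ n : ℕ, -c ≠ (n : ℂ))
    (u v : ℕ → ℂ)
    (hu0 : u 0 = 1) (hu1 : u 1 = a * b / c + Complex.I * p)
    (hu2 : u 2 = Complex.I * a * b * p / c + a * (a + 1) * b * (b + 1) / (2 * c * (c + 1)) - p ^ 2 / 2)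
    (hv0 : v 0 = 1) (hv1 : v 1 = a * b / c - Complex.I * p)
    (hv2 : v 2 = -(Complex.I * a * b * p) / c + a * (a + 1) * b * (b + 1) / (2 * c * (c + 1)) - p ^ 2 / 2)
    (hrecu : ∀ n : ℕ, 2 ≤ n →
      u (n + 1) = ((a + (n : ℂ)) * (b + (n : ℂ)) + Complex.I * p * (c + 2 * (n : ℂ))) /
          (((n : ℂ) + 1) * (c + (n : ℂ))) * u n
        + p * (p - Complex.I * (a + b + 2 * (n : ℂ) - 1)) / (((n : ℂ) + 1) * (c + (n : ℂ))) * u (n - 1)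
        - p ^ 2 / (((n : ℂ) + 1) * (c + (n : ℂ))) * u (n - 2))
    (hrecv : ∀ n : ℕ, 2 ≤ n →
      v (n + 1) = ((a + (n : ℂ)) * (b + (n : ℂ)) - Complex.I * p * (c + 2 * (n : ℂ))) /
          (((n : ℂ) + 1) * (c + (n : ℂ))) * v n
        + p * (p + Complex.I * (a + b + 2 * (n : ℂ) - 1)) / (((n : ℂ) + 1) * (c + (n : ℂ))) * v (n - 1)
        - p ^ 2 / (((n : ℂ) + 1) * (c + (n : ℂ))) * v (n - 2)) :
    ∀ z : ℂ, ‖z‖ < 1 → Complex.cos (p * z) * F a b c z = ∑' n : ℕ, (u n + v n) / 2 * z ^ n := by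
  have hu : ∀ n, u n = Wser a b c (Complex.I * p) n := by
    refine eq_Wser hc _ u ?_ ?_ ?_ ?_
    · rw [hu0, Wser_zero]
    · rw [hu1, Wser_one]
    · rw [hu2, Wser_two]
      linear_combination (-p ^ 2 / 2) * Complex.I_sq
    · intro n hn
      rw [hrecu n hn]
      linear_combination (p ^ 2 * u (n - 1) / (((n : ℂ) + 1) * (c + (n : ℂ)))
        - p ^ 2 * u (n - 2) / (((n : ℂ) + 1) * (c + (n : ℂ)))) * Complex.I_sq
  have hv : ∀ n, v n = Wser a b c (-(Complex.I * p)) n := by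
    refine eq_Wser hc _ v ?_ ?_ ?_ ?_
    · rw [hv0, Wser_zero]
    · rw [hv1, Wser_one]; ring
    · rw [hv2, Wser_two]
      linear_combination (-p ^ 2 / 2) * Complex.I_sq
    · intro n hn
      rw [hrecv n hn]
      linear_combination (p ^ 2 * v (n - 1) / (((n : ℂ) + 1) * (c + (n : ℂ)))
        - p ^ 2 * v (n - 2) / (((n : ℂ) + 1) * (c + (n : ℂ)))) * Complex.I_sq
  intro z hz
  obtain ⟨heu, hsu⟩ := exp_mul_F hc (Complex.I * p) hz
  obtain ⟨hev, hsv⟩ := exp_mul_F hc (-(Complex.I * p)) hz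
  have hcos : Complex.cos (p * z) =
      (Complex.exp (Complex.I * p * z) + Complex.exp (-(Complex.I * p) * z)) / 2 := by
    rw [Complex.cos, show p * z * Complex.I = Complex.I * p * z from by ring,
      show -(p * z) * Complex.I = -(Complex.I * p) * z from by ring]
  calc Complex.cos (p * z) * F a b c z
      = (Complex.exp (Complex.I * p * z) * F a b c z
          + Complex.exp (-(Complex.I * p) * z) * F a b c z) / 2 := by rw [hcos]; ring
    _ = ((∑' n : ℕ, Wser a b c (Complex.I * p) n * z ^ n)
          + ∑' n : ℕ, Wser a b c (-(Complex.I * p)) n * z ^ n) / 2 := by rw [heu, hev]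
    _ = ∑' n : ℕ, (u n + v n) / 2 * z ^ n := by
        have he : (fun n : ℕ => (u n + v n) / 2 * z ^ n)
            = fun n : ℕ => (Wser a b c (Complex.I * p) n * z ^ n
              + Wser a b c (-(Complex.I * p)) n * z ^ n) / 2 := by
          funext n; rw [hu n, hv n]; ring
        rw [he, tsum_div_const, Summable.tsum_add hsu hsv]
end
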